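/- arXiv:0712.4337 — 2 statements merged into one kernel-verified Lean document; each statement's English description precedes it below -/
import Mathlib

section
/- Let x ∈ A^ℕ be a linearly recurrent sequence with constant K that is not ultimately periodic. Then: (1) for every n ≥ 1 the number of distinct factors of x of length n is at most Kn; (2) x is (K+1)-power free, i.e., if u^{K+1} is a factor of x then u is the empty word; (3) for every nonempty factor u of x and every return word w ∈ R_u one has |w| > |u|/K; (4) for every nonempty factor u of x, the number of return words satisfies #R_u ≤ K(K+1)². -/
/-- The factor `x_{[i, i+n)}` of a sequence. -/
def factorAt {A : Type*} (x : ℕ → A) (i n : ℕ) : List A := (List.range n).map fun k => x (i + k)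

/-- `i` is an occurrence of the word `u` in the sequence `x`. -/
def OccursAt {A : Type*} (x : ℕ → A) (u : List A) (i : ℕ) : Prop := factorAt x i u.length = u

/-- `u` is a factor of `x`. -/
def IsFactor {A : Type*} (x : ℕ → A) (u : List A) : Prop := ∃ i, OccursAt x u i

/-- `u` occurs in `x` with bounded gaps (its set of occurrences is syndetic). -/
def BoundedGaps {A : Type*} (x : ℕ → A) (u : List A) : Prop :=
  ∃ g, 0 < g ∧ ∀ i, ∃ j, i ≤ j ∧ j < i + g ∧ OccursAt x u j

/-- `x` is uniformly recurrent: every factor occurs with bounded gaps. -/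
def UniformlyRecurrent {A : Type*} (x : ℕ → A) : Prop :=
  ∀ u, IsFactor x u → BoundedGaps x u

/-- `w` is a return word to `u` in `x`: `w = x_{[j,k)}` for consecutive
occurrences `j < k` of `u` in `x`. -/
def IsReturnWord {A : Type*} (x : ℕ → A) (u w : List A) : Prop :=
  ∃ j k, j < k ∧ OccursAt x u j ∧ OccursAt x u k ∧
    (∀ m, j < m → m < k → ¬ OccursAt x u m) ∧ w = factorAt x j (k - j)

/-- `x` is linearly recurrent with constant `K`: it is uniformly recurrent and every
return word `w` to every nonempty factor `u` satisfies `|w| ≤ K|u|`. -/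
def LinearlyRecurrent {A : Type*} (x : ℕ → A) (K : ℕ) : Prop :=
  UniformlyRecurrent x ∧ ∀ u w, u ≠ [] → IsReturnWord x u w → w.length ≤ K * u.length

/-- `x` is ultimately periodic. -/
def UltimatelyPeriodic {A : Type*} (x : ℕ → A) : Prop :=
  ∃ N t, 0 < t ∧ ∀ n, N ≤ n → x (n + t) = x n

/-!
Linear recurrence puts an occurrence of a factor `u` into every window of `K|u|` consecutive
positions beyond its first occurrence. So all factors of length `n` occur in one such window,
and there are at most `Kn` of them. If `u ^ (K + 1)` occurred beyond the first occurrences of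
all factors of length `|u|`, each of them would occur inside it, and the `|u|`-periodicity of
`u ^ (K + 1)` leaves room for only `|u|` of them; complexity `p(|u|) ≤ |u|` contradicts the
Morse–Hedlund theorem. A return word `w` to `u` with `K|w| ≤ |u|` makes `w ^ (K + 1)` a prefix
of `w ++ u`, which occurs. Finally, the return words `w` to `u` are determined by occurrences of
`w ++ u`, of length at most `(K + 1)|u|`, in one window of `K(K + 1)|u|` positions, and these
occurrences are more than `|u|/K` apart.
-/

section

variable {A : Type*} {x : ℕ → A} {u v w : List A} {i j K : ℕ}

@[simp] lemma length_factorAt (x : ℕ → A) (i n : ℕ) : (factorAt x i n).length = n := by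
  simp [factorAt]

@[simp] lemma getElem_factorAt (x : ℕ → A) (i n t : ℕ) (h : t < (factorAt x i n).length) :
    (factorAt x i n)[t] = x (i + t) := by
  simp [factorAt]

lemma factorAt_congr {a b n : ℕ} (h : ∀ t < n, x (a + t) = x (b + t)) :
    factorAt x a n = factorAt x b n :=
  List.ext_getElem (by simp) fun t ht _ => by simpa using h t (by simpa using ht)

lemma factorAt_add (x : ℕ → A) (i m n : ℕ) :
    factorAt x i (m + n) = factorAt x i m ++ factorAt x (i + m) n := by
  simp only [factorAt, List.range_add, List.map_append, List.map_map]
  congr 1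
  exact List.map_congr_left fun k _ => by simp [add_assoc]

lemma take_factorAt (x : ℕ → A) (i : ℕ) {m n : ℕ} (h : m ≤ n) :
    (factorAt x i n).take m = factorAt x i m := by
  rw [factorAt, ← List.map_take, List.take_range, Nat.min_eq_left h, factorAt]

lemma occursAt_factorAt (x : ℕ → A) (i n : ℕ) : OccursAt x (factorAt x i n) i := by
  rw [OccursAt, length_factorAt]

lemma OccursAt.apply (h : OccursAt x u i) {t : ℕ} (ht : t < u.length) : x (i + t) = u[t] := by
  have := List.getElem_of_eq h (by simpa using ht)
  simpa using this

lemma OccursAt.eq_factorAt (h : OccursAt x u i) : u = factorAt x i u.length := h.symm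

lemma occursAt_append :
    OccursAt x (u ++ v) i ↔ OccursAt x u i ∧ OccursAt x v (i + u.length) := by
  rw [OccursAt, OccursAt, OccursAt, List.length_append, factorAt_add]
  exact ⟨fun h => List.append_inj h (by simp), fun ⟨h₁, h₂⟩ => by rw [h₁, h₂]⟩

lemma OccursAt.of_prefix (h : OccursAt x v i) (huv : u <+: v) : OccursAt x u i := by
  rw [List.prefix_iff_eq_take.mp huv, OccursAt, List.length_take,
    Nat.min_eq_left huv.length_le, ← take_factorAt x i huv.length_le, h]

lemma OccursAt.prefix_of_length_le (hu : OccursAt x u i) (hv : OccursAt x v i)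
    (h : u.length ≤ v.length) : u <+: v := by
  rw [hu.eq_factorAt, hv.eq_factorAt, ← take_factorAt x i h]
  exact List.take_prefix _ _

lemma OccursAt.transfer (hj : OccursAt x v j) (hi : OccursAt x v i) {d : ℕ}
    (hu : OccursAt x u (j + d)) (hd : d + u.length ≤ v.length) : OccursAt x u (i + d) := by
  have : factorAt x (i + d) u.length = factorAt x (j + d) u.length := factorAt_congr fun t ht => by
    rw [add_assoc, add_assoc, hi.apply (by omega), hj.apply (by omega)]
  rw [OccursAt, this]
  exact hu

lemma OccursAt.of_flatten_replicate {c : ℕ} (h : OccursAt x (List.replicate c u).flatten i)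
    {s : ℕ} (hs : s < c) : OccursAt x u (i + s * u.length) := by
  induction c generalizing i s with
  | zero => omega
  | succ c ih =>
    rw [List.replicate_succ, List.flatten_cons, occursAt_append] at h
    rcases s with _ | s
    · simpa using h.1
    · simpa [add_mul, add_assoc, add_comm u.length] using ih h.2 (s := s) (by omega)

lemma OccursAt.apply_eq_apply_mod {c : ℕ} (h : OccursAt x (List.replicate c u).flatten i)
    {a : ℕ} (ha : a < c * u.length) : x (i + a) = x (i + a % u.length) := by
  have hn : 0 < u.length := by
    rcases Nat.eq_zero_or_pos u.length with h0 | h0 <;> simp_all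
  have hr := Nat.mod_lt a hn
  have hq : a / u.length < c := (Nat.div_lt_iff_lt_mul hn).mpr ha
  have h₁ := (h.of_flatten_replicate hq).apply hr
  have h₂ := (h.of_flatten_replicate (s := 0) (Nat.zero_lt_of_lt hq)).apply hr
  rw [add_assoc, Nat.div_add_mod'] at h₁
  simpa [h₁] using h₂.symm

lemma Set.finite_and_ncard_le_of_forall_finset {α : Type*} {s : Set α} {N : ℕ}
    (h : ∀ t : Finset α, ↑t ⊆ s → t.card ≤ N) : s.Finite ∧ s.ncard ≤ N := by
  have hfin : s.Finite := by
    by_contra hinf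
    obtain ⟨t, ht, hcard⟩ := Set.Infinite.exists_subset_card_eq hinf (N + 1)
    have := h t ht
    omega
  refine ⟨hfin, ?_⟩
  rw [Set.ncard_eq_toFinset_card s hfin]
  exact h _ (by simp)

lemma Finset.card_le_of_separated {s : Finset ℕ} {a L K D C : ℕ} (hK : 0 < K) (hD : 0 < D)
    (hs : ∀ p ∈ s, a ≤ p ∧ p < a + L)
    (hsep : ∀ p ∈ s, ∀ q ∈ s, p < q → D ≤ K * (q - p))
    (hL : K * L ≤ C * D) : s.card ≤ C := by
  have hmono : ∀ p ∈ s, ∀ q ∈ s, p < q → K * (p - a) / D < K * (q - a) / D := by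
    intro p hp q hq hpq
    have hsplit : K * (q - a) = K * (p - a) + K * (q - p) := by
      rw [← Nat.mul_add]
      have := hs p hp
      congr 1
      omega
    calc K * (p - a) / D < K * (p - a) / D + 1 := lt_add_one _
      _ = (K * (p - a) + D) / D := (Nat.add_div_right _ hD).symm
      _ ≤ K * (q - a) / D := by
        gcongr
        rw [hsplit]
        exact Nat.add_le_add_left (hsep p hp q hq hpq) _
  calc s.card ≤ (Finset.range C).card := by
        refine Finset.card_le_card_of_injOn (fun p => K * (p - a) / D) (fun p hp => ?_)
          (fun p hp q hq h => ?_)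
        · have hp' := hs p hp
          have : K * (p - a) < K * L := Nat.mul_lt_mul_of_pos_left (by omega) hK
          exact Finset.mem_range.mpr (Nat.div_lt_of_lt_mul (by rw [Nat.mul_comm D]; omega))
        · rcases lt_trichotomy p q with hpq | hpq | hpq
          · exact absurd h (hmono p hp q hq hpq).ne
          · exact hpq
          · exact absurd h (hmono q hq p hp hpq).ne'
    _ = C := Finset.card_range C

lemma List.flatten_replicate_prefix_of_prefix_append {α : Type*} {u w : List α}
    (h : u <+: w ++ u) {s : ℕ} (hs : s * w.length ≤ u.length) :
    (List.replicate s w).flatten <+: u := by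
  induction s with
  | zero => simp
  | succ s ih =>
    have h' : (List.replicate (s + 1) w).flatten <+: w ++ u := by
      rw [List.replicate_succ, List.flatten_cons]
      exact (List.prefix_append_right_inj w).mpr (ih (by nlinarith))
    exact List.prefix_of_prefix_length_le h' h (by simpa using hs)

def factorsOfLength (x : ℕ → A) (n : ℕ) : Set (List A) := Set.range fun i => factorAt x i n

lemma mem_factorsOfLength {n : ℕ} : u ∈ factorsOfLength x n ↔ ∃ i, factorAt x i n = u :=
  Iff.rfl

lemma factorsOfLength_eq_setOf (x : ℕ → A) (n : ℕ) :
    factorsOfLength x n = {u | u.length = n ∧ IsFactor x u} := by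
  ext u
  constructor
  · rintro ⟨i, rfl⟩
    exact ⟨length_factorAt x i n, i, occursAt_factorAt x i n⟩
  · rintro ⟨rfl, i, h⟩
    exact ⟨i, h⟩

lemma factorsOfLength_zero (x : ℕ → A) : factorsOfLength x 0 = {[]} := by
  simp [factorsOfLength, factorAt]

lemma factorsOfLength_eq_image_take {m n : ℕ} (h : m ≤ n) :
    factorsOfLength x m = List.take m '' factorsOfLength x n := by
  rw [factorsOfLength, factorsOfLength, ← Set.range_comp]
  congr 1
  funext i
  exact (take_factorAt x i h).symm

lemma Set.Finite.factorsOfLength_of_le {m n : ℕ} (hfin : (factorsOfLength x n).Finite)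
    (h : m ≤ n) : (factorsOfLength x m).Finite := by
  rw [factorsOfLength_eq_image_take h]
  exact hfin.image _

lemma ncard_factorsOfLength_le_succ {m : ℕ} (hfin : (factorsOfLength x (m + 1)).Finite) :
    (factorsOfLength x m).ncard ≤ (factorsOfLength x (m + 1)).ncard := by
  rw [factorsOfLength_eq_image_take m.le_succ]
  exact Set.ncard_image_le hfin

lemma ultimatelyPeriodic_of_factorAt_succ_eq {m : ℕ} (hfin : (factorsOfLength x m).Finite)
    (h : ∀ a b, factorAt x a m = factorAt x b m → factorAt x a (m + 1) = factorAt x b (m + 1)) :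
    UltimatelyPeriodic x := by
  have hstep : ∀ a b, factorAt x a m = factorAt x b m →
      x a = x b ∧ factorAt x (a + 1) m = factorAt x (b + 1) m := by
    intro a b hab
    have := h a b hab
    rw [add_comm m 1, factorAt_add, factorAt_add] at this
    obtain ⟨h₁, h₂⟩ := List.append_inj this (by simp)
    exact ⟨by simpa [factorAt] using h₁, h₂⟩
  obtain ⟨i, j, hij, heq⟩ :=
    hfin.exists_lt_map_eq_of_forall_mem (f := fun a => factorAt x a m) fun a => Set.mem_range_self a
  have hshift : ∀ s, factorAt x (i + s) m = factorAt x (j + s) m := by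
    intro s
    induction s with
    | zero => exact heq
    | succ s ih => exact (hstep _ _ ih).2
  refine ⟨i, j - i, by omega, fun n hn => ?_⟩
  obtain ⟨s, rfl⟩ := Nat.exists_eq_add_of_le hn
  rw [show i + s + (j - i) = j + s by omega]
  exact ((hstep _ _ (hshift s)).1).symm

lemma ultimatelyPeriodic_of_ncard_succ_le {m : ℕ} (hfin : (factorsOfLength x (m + 1)).Finite)
    (h : (factorsOfLength x (m + 1)).ncard ≤ (factorsOfLength x m).ncard) :
    UltimatelyPeriodic x := by
  have himg := factorsOfLength_eq_image_take (x := x) m.le_succ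
  have hinj : Set.InjOn (List.take m) (factorsOfLength x (m + 1)) := by
    refine Set.injOn_of_ncard_image_eq (le_antisymm (Set.ncard_image_le hfin) ?_) hfin
    rwa [← himg]
  refine ultimatelyPeriodic_of_factorAt_succ_eq (hfin.factorsOfLength_of_le m.le_succ)
    fun a b hab => hinj (Set.mem_range_self a) (Set.mem_range_self b) ?_
  simpa [take_factorAt] using hab

/-- The Morse–Hedlund theorem. -/
theorem ultimatelyPeriodic_of_ncard_factorsOfLength_le {n : ℕ}
    (hfin : (factorsOfLength x n).Finite) (h : (factorsOfLength x n).ncard ≤ n) :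
    UltimatelyPeriodic x := by
  by_contra hnp
  have hgrow : ∀ m ≤ n, m + 1 ≤ (factorsOfLength x m).ncard := by
    intro m hm
    induction m with
    | zero => simp [factorsOfLength_zero]
    | succ m ih =>
      have hfin' := hfin.factorsOfLength_of_le hm
      have hle := ncard_factorsOfLength_le_succ hfin'
      have hlt : ¬ (factorsOfLength x (m + 1)).ncard ≤ (factorsOfLength x m).ncard :=
        fun h' => hnp (ultimatelyPeriodic_of_ncard_succ_le hfin' h')
      have := ih (by omega)
      omega
  have := hgrow n le_rfl
  omega

lemma ncard_factorsOfLength_le_of_occursAt_flatten_replicate (hu : u ≠ []) (hK : 1 ≤ K)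
    (hi : OccursAt x (List.replicate (K + 1) u).flatten i)
    (hocc : ∀ v ∈ factorsOfLength x u.length,
      ∃ b ∈ Finset.Ioc i (i + K * u.length), OccursAt x v b) :
    (factorsOfLength x u.length).ncard ≤ u.length := by
  classical
  set n := u.length
  have hn : 0 < n := List.length_pos_iff.mpr hu
  have hKn : n ≤ K * n := Nat.le_mul_of_pos_left n hK
  have hper : ∀ a < K * n + n, x (i + a) = x (i + a % n) := fun a ha =>
    hi.apply_eq_apply_mod (by change _ < (K + 1) * n; rw [add_mul, one_mul]; exact ha)
  have hsub :
      factorsOfLength x n ⊆ ↑((Finset.range n).image fun r => factorAt x (i + r) n) := by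
    intro v hv
    obtain ⟨b, hb, hbv⟩ := hocc v hv
    obtain ⟨c, rfl⟩ := mem_factorsOfLength.mp hv
    rw [Finset.mem_Ioc] at hb
    have hbc : factorAt x b n = factorAt x c n := by simpa using hbv.eq_factorAt.symm
    refine Finset.mem_coe.mpr (Finset.mem_image.mpr ⟨(b - i) % n,
      Finset.mem_range.mpr (Nat.mod_lt _ hn), (factorAt_congr fun t ht => ?_).trans hbc⟩)
    have hmod := Nat.mod_lt (b - i) hn
    calc x (i + (b - i) % n + t) = x (i + ((b - i) % n + t) % n) := by
          rw [add_assoc]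
          exact hper _ (by omega)
      _ = x (i + (b - i + t)) := by
          rw [Nat.mod_add_mod]
          exact (hper _ (by omega)).symm
      _ = x (b + t) := by congr 1; omega
  calc (factorsOfLength x n).ncard ≤ (((Finset.range n).image fun r => factorAt x (i + r) n) :
        Set (List A)).ncard := Set.ncard_le_ncard hsub (Finset.finite_toSet _)
    _ ≤ n := by
        rw [Set.ncard_coe_finset]
        exact Finset.card_image_le.trans (Finset.card_range n).le

def IsReturnWordAt (x : ℕ → A) (u w : List A) (j : ℕ) : Prop :=
  w ≠ [] ∧ OccursAt x u j ∧ OccursAt x (w ++ u) j ∧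
    ∀ m, j < m → m < j + w.length → ¬ OccursAt x u m

lemma IsReturnWord.exists_isReturnWordAt (h : IsReturnWord x u w) :
    ∃ j, IsReturnWordAt x u w j := by
  obtain ⟨j, k, hjk, hj, hk, hgap, rfl⟩ := h
  have hk' : j + (factorAt x j (k - j)).length = k := by simp only [length_factorAt]; omega
  refine ⟨j, List.ne_nil_of_length_pos (by simp only [length_factorAt]; omega), hj,
    occursAt_append.mpr ⟨occursAt_factorAt x j _, by rwa [hk']⟩, by rwa [hk']⟩

namespace IsReturnWordAt

lemma occursAt (h : IsReturnWordAt x u w j) : OccursAt x w j := (occursAt_append.mp h.2.2.1).1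

lemma occursAt_add_length (h : IsReturnWordAt x u w j) : OccursAt x u (j + w.length) :=
  (occursAt_append.mp h.2.2.1).2

lemma add_length_le (h : IsReturnWordAt x u w j) {k : ℕ} (hk : OccursAt x u k) (hjk : j < k) :
    j + w.length ≤ k := by
  by_contra hlt
  exact h.2.2.2 k hjk (by omega) hk

lemma unique (h : IsReturnWordAt x u w j) (h' : IsReturnWordAt x u v j) : w = v := by
  have hle : ∀ {w v},
      IsReturnWordAt x u w j → IsReturnWordAt x u v j → w.length ≤ v.length :=
    fun h h' => by
      have := List.length_pos_iff.mpr h'.1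
      have := h.add_length_le h'.occursAt_add_length (by omega)
      omega
  rw [h.occursAt.eq_factorAt, h'.occursAt.eq_factorAt, le_antisymm (hle h h') (hle h' h)]

lemma of_occursAt (h : IsReturnWordAt x u w j) (hi : OccursAt x (w ++ u) i) :
    IsReturnWordAt x u w i := by
  obtain ⟨hw, hu, hwu, hgap⟩ := h
  refine ⟨hw, ?_, hi, fun m hm hm' hocc => ?_⟩
  · simpa using hwu.transfer hi (d := 0) (by simpa using hu) (by simp)
  · refine hgap (j + (m - i)) (by omega) (by omega) (hi.transfer hwu ?_ ?_)
    · rwa [show i + (m - i) = m by omega]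
    · simp only [List.length_append]
      omega

end IsReturnWordAt

theorem length_lt_mul_length_of_isReturnWord
    (hpf : ∀ v : List A, IsFactor x (List.replicate (K + 1) v).flatten → v = [])
    (hw : IsReturnWord x u w) : u.length < K * w.length := by
  obtain ⟨j, hw_ne, hu, hwu, -⟩ := hw.exists_isReturnWordAt
  by_contra! hle
  have hpre : u <+: w ++ u := hu.prefix_of_length_le hwu (by simp)
  have hpow : (List.replicate (K + 1) w).flatten <+: w ++ u := by
    rw [List.replicate_succ, List.flatten_cons]
    exact (List.prefix_append_right_inj w).mpr
      (List.flatten_replicate_prefix_of_prefix_append hpre hle)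
  exact hw_ne (hpf w ⟨j, hwu.of_prefix hpow⟩)

lemma UniformlyRecurrent.exists_occursAt_ge (h : UniformlyRecurrent x) (hu : IsFactor x u)
    (m : ℕ) : ∃ j, m ≤ j ∧ OccursAt x u j := by
  obtain ⟨g, -, hg⟩ := h u hu
  obtain ⟨j, hmj, -, hj⟩ := hg m
  exact ⟨j, hmj, hj⟩

lemma UniformlyRecurrent.exists_isReturnWord (h : UniformlyRecurrent x) (hi : OccursAt x u i) :
    ∃ k, i < k ∧ OccursAt x u k ∧ IsReturnWord x u (factorAt x i (k - i)) := by
  classical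
  have hex : ∃ k, i < k ∧ OccursAt x u k := h.exists_occursAt_ge ⟨i, hi⟩ (i + 1)
  obtain ⟨hik, hk⟩ := Nat.find_spec hex
  exact ⟨_, hik, hk, i, _, hik, hi, hk,
    fun m him hmk hm => Nat.find_min hex hmk ⟨him, hm⟩, rfl⟩

namespace LinearlyRecurrent

variable (hlr : LinearlyRecurrent x K)
include hlr

lemma exists_occursAt_le (hu : u ≠ []) (hi : OccursAt x u i) :
    ∃ k, i < k ∧ k ≤ i + K * u.length ∧ OccursAt x u k := by
  obtain ⟨k, hik, hk, hret⟩ := hlr.1.exists_isReturnWord hi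
  have := hlr.2 u _ hu hret
  rw [length_factorAt] at this
  exact ⟨k, hik, by omega, hk⟩

lemma one_le : 1 ≤ K := by
  obtain ⟨k, h0k, hk, -⟩ :=
    hlr.exists_occursAt_le (u := factorAt x 0 1) (by simp [factorAt]) (occursAt_factorAt x 0 1)
  simp only [length_factorAt, mul_one] at hk
  omega

lemma exists_occursAt_Ioc (hu : u ≠ []) (hi : OccursAt x u i) {m : ℕ} (him : i ≤ m) :
    ∃ b ∈ Finset.Ioc m (m + K * u.length), OccursAt x u b := by
  classical
  have hlast : OccursAt x u (Nat.findGreatest (OccursAt x u) m) := Nat.findGreatest_spec him hi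
  have hle := Nat.findGreatest_le (P := OccursAt x u) m
  obtain ⟨k, hk, hkle, hocc⟩ := hlr.exists_occursAt_le hu hlast
  have hmk : m < k := by
    by_contra! hkm
    have := Nat.le_findGreatest hkm hocc
    omega
  exact ⟨k, Finset.mem_Ioc.mpr ⟨hmk, by omega⟩, hocc⟩

lemma exists_forall_occursAt_Ioc (S : Finset (List A))
    (hS : ∀ u ∈ S, u ≠ [] ∧ IsFactor x u) :
    ∃ m, ∀ i, m ≤ i → ∀ u ∈ S,
      ∃ b ∈ Finset.Ioc i (i + K * u.length), OccursAt x u b := by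
  have hocc : ∀ u ∈ S, ∃ i, OccursAt x u i := fun u hu => (hS u hu).2
  choose! f hf using hocc
  exact ⟨S.sup f, fun i hi u hu =>
    hlr.exists_occursAt_Ioc (hS u hu).1 (hf u hu) ((S.le_sup hu).trans hi)⟩

lemma card_le_of_subset_factorsOfLength {n : ℕ} (hn : 0 < n) (S : Finset (List A))
    (hS : ↑S ⊆ factorsOfLength x n) : S.card ≤ K * n := by
  classical
  have hfac : ∀ u ∈ S, u ≠ [] ∧ IsFactor x u := by
    intro u hu
    obtain ⟨i, rfl⟩ := mem_factorsOfLength.mp (hS hu)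
    exact ⟨List.ne_nil_of_length_pos (by simpa using hn), i, occursAt_factorAt x i n⟩
  obtain ⟨m, hm⟩ := hlr.exists_forall_occursAt_Ioc S hfac
  calc S.card ≤ ((Finset.Ioc m (m + K * n)).image fun b => factorAt x b n).card := by
        refine Finset.card_le_card fun u hu => ?_
        obtain ⟨i, rfl⟩ := mem_factorsOfLength.mp (hS hu)
        obtain ⟨b, hb, hocc⟩ := hm m le_rfl _ hu
        rw [length_factorAt] at hb
        exact Finset.mem_image.mpr ⟨b, hb, by simpa using hocc.eq_factorAt.symm⟩
    _ ≤ (Finset.Ioc m (m + K * n)).card := Finset.card_image_le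
    _ = K * n := by simp

theorem ncard_factorsOfLength_le {n : ℕ} (hn : 0 < n) :
    (factorsOfLength x n).Finite ∧ (factorsOfLength x n).ncard ≤ K * n :=
  Set.finite_and_ncard_le_of_forall_finset (hlr.card_le_of_subset_factorsOfLength hn)

theorem eq_nil_of_isFactor_flatten_replicate (hnp : ¬ UltimatelyPeriodic x)
    (h : IsFactor x (List.replicate (K + 1) u).flatten) : u = [] := by
  classical
  by_contra hu
  have hn : 0 < u.length := List.length_pos_iff.mpr hu
  obtain ⟨hfin, -⟩ := hlr.ncard_factorsOfLength_le hn
  obtain ⟨m, hm⟩ := hlr.exists_forall_occursAt_Ioc hfin.toFinset fun v hv => by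
    obtain ⟨i, rfl⟩ := mem_factorsOfLength.mp (hfin.mem_toFinset.mp hv)
    exact ⟨List.ne_nil_of_length_pos (by simpa using hn), i, occursAt_factorAt x i _⟩
  obtain ⟨i, hmi, hi⟩ := hlr.1.exists_occursAt_ge h m
  refine hnp (ultimatelyPeriodic_of_ncard_factorsOfLength_le hfin ?_)
  refine ncard_factorsOfLength_le_of_occursAt_flatten_replicate hu hlr.one_le hi fun v hv => ?_
  have hv' := hfin.mem_toFinset.mpr hv
  obtain ⟨c, rfl⟩ := mem_factorsOfLength.mp hv
  simpa using hm i hmi _ hv'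

lemma exists_forall_isReturnWordAt_Ioc (hu : u ≠ []) {S : Finset (List A)}
    (hS : ∀ w ∈ S, IsReturnWord x u w) :
    ∃ m, ∀ w ∈ S,
      ∃ b ∈ Finset.Ioc m (m + K * ((K + 1) * u.length)), IsReturnWordAt x u w b := by
  classical
  have hret : ∀ w ∈ S, ∃ j, IsReturnWordAt x u w j :=
    fun w hw => (hS w hw).exists_isReturnWordAt
  obtain ⟨m, hm⟩ := hlr.exists_forall_occursAt_Ioc (S.image (· ++ u)) (by
    simp only [Finset.mem_image, forall_exists_index, and_imp, forall_apply_eq_imp_iff₂]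
    intro w hw
    obtain ⟨j, hj⟩ := hret w hw
    exact ⟨by simp [hu], j, hj.2.2.1⟩)
  refine ⟨m, fun w hw => ?_⟩
  obtain ⟨j, hj⟩ := hret w hw
  obtain ⟨b, hb, hocc⟩ := hm m le_rfl (w ++ u) (Finset.mem_image_of_mem _ hw)
  have hwlen : w.length ≤ K * u.length := hlr.2 u w hu (hS w hw)
  rw [Finset.mem_Ioc, List.length_append] at hb
  refine ⟨b, Finset.mem_Ioc.mpr ⟨hb.1, hb.2.trans ?_⟩, hj.of_occursAt hocc⟩
  gcongr
  rw [add_mul, one_mul]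
  omega

theorem card_le_of_forall_isReturnWord
    (hpf : ∀ v : List A, IsFactor x (List.replicate (K + 1) v).flatten → v = [])
    (hu : u ≠ []) {S : Finset (List A)} (hS : ∀ w ∈ S, IsReturnWord x u w) :
    S.card ≤ K * (K + 1) ^ 2 := by
  classical
  obtain ⟨m, hm⟩ := hlr.exists_forall_isReturnWordAt_Ioc hu hS
  choose! pos hpos_mem hpos using hm
  have hinj : Set.InjOn pos S := fun w hw v hv h => (hpos w hw).unique (h ▸ hpos v hv)
  rw [← Finset.card_image_of_injOn hinj]
  refine Finset.card_le_of_separated (a := m + 1) (L := K * ((K + 1) * u.length))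
    (D := u.length + 1) hlr.one_le u.length.succ_pos ?_ ?_ ?_
  · simp only [Finset.mem_image, forall_exists_index, and_imp, forall_apply_eq_imp_iff₂]
    intro w hw
    have := Finset.mem_Ioc.mp (hpos_mem w hw)
    omega
  · simp only [Finset.mem_image, forall_exists_index, and_imp, forall_apply_eq_imp_iff₂]
    intro w hw v hv hwv
    have hgap := (hpos w hw).add_length_le (hpos v hv).2.1 hwv
    have hlong := length_lt_mul_length_of_isReturnWord hpf (hS w hw)
    have : K * w.length ≤ K * (pos v - pos w) := Nat.mul_le_mul_left _ (by omega)
    omega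
  · calc K * (K * ((K + 1) * u.length)) = (K * (K + 1)) * (K * u.length) := by ring
      _ ≤ (K * (K + 1)) * ((K + 1) * (u.length + 1)) := by gcongr <;> omega
      _ = K * (K + 1) ^ 2 * (u.length + 1) := by ring

end LinearlyRecurrent

end

/-- **Properties of non-periodic linearly recurrent sequences.** Let `x` be linearly
recurrent with constant `K` and not ultimately periodic. Then: (1) `x` has at most `Kn`
factors of length `n`; (2) `x` is `(K+1)`-power free; (3) every return word `w` to a
nonempty factor `u` satisfies `|w| > |u|/K`; (4) `u` has at most `K(K+1)²` return words. -/
theorem linearly_recurrent_properties {A : Type*} (x : ℕ → A) (K : ℕ)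
    (hlr : LinearlyRecurrent x K) (hnp : ¬ UltimatelyPeriodic x) :
    (∀ n : ℕ, 1 ≤ n →
      { u : List A | u.length = n ∧ IsFactor x u }.Finite ∧
      { u : List A | u.length = n ∧ IsFactor x u }.ncard ≤ K * n) ∧
    (∀ u : List A, IsFactor x (List.replicate (K + 1) u).flatten → u = []) ∧
    (∀ u w : List A, u ≠ [] → IsFactor x u → IsReturnWord x u w →
      u.length < K * w.length) ∧
    (∀ u : List A, u ≠ [] → IsFactor x u →
      { w : List A | IsReturnWord x u w }.Finite ∧
      { w : List A | IsReturnWord x u w }.ncard ≤ K * (K + 1) ^ 2) := by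
  have hpf : ∀ u : List A, IsFactor x (List.replicate (K + 1) u).flatten → u = [] :=
    fun _ => hlr.eq_nil_of_isFactor_flatten_replicate hnp
  refine ⟨fun n hn => ?_, hpf, fun u w _ _ hw => length_lt_mul_length_of_isReturnWord hpf hw,
    fun u hu _ => ?_⟩
  · rw [← factorsOfLength_eq_setOf]
    exact hlr.ncard_factorsOfLength_le hn
  · exact Set.finite_and_ncard_le_of_forall_finset fun S hS =>
      hlr.card_le_of_forall_isReturnWord hpf hu fun w hw => hS hw
end

section
/- Let p and q be multiplicatively independent integers, each at least 2. Let σ be a substitution of constant length p on a finite alphabet A with fixed point y, let τ be a substitution of constant length q on a finite alphabet B with fixed point z, and let φ : A → C and ψ : B → C be letter-to-letter morphisms with φ(y) = ψ(z) = x. Then every letter of C having infinitely many occurrences in x occurs in x with bounded gaps. -/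
/-- Extension of a morphism `σ : A → A*` to words by concatenation. -/
def substWord {A : Type*} (σ : A → List A) (w : List A) : List A := w.flatMap σ

/-- `σⁿ(u)` : the `n`-th iterate of the morphism `σ` applied to the word `u`. -/
def wordIter {A : Type*} (σ : A → List A) (n : ℕ) (u : List A) : List A :=
  (substWord σ)^[n] u

/-- The prefix of length `n` of a one-sided sequence. -/
def seqPrefix {A : Type*} (x : ℕ → A) (n : ℕ) : List A := (List.range n).map x

/-- The word `w` is a prefix of the sequence `x`. -/
def IsPrefixSeq {A : Type*} (w : List A) (x : ℕ → A) : Prop := w = seqPrefix x w.length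

/-- `x` is a fixed point of `σ`, i.e. `σ(x) = x`: the image under `σ` of every prefix
of `x` is again a prefix of `x`. -/
def IsFixedPoint {A : Type*} (σ : A → List A) (x : ℕ → A) : Prop :=
  ∀ n, IsPrefixSeq (substWord σ (seqPrefix x n)) x

/-- `σ` is a substitution: some letter `a` is the first letter of `σ(a)`, and
`|σⁿ(b)| → ∞` for every letter `b`. -/
def IsSubstitution {A : Type*} (σ : A → List A) : Prop :=
  (∃ a, (σ a).head? = some a) ∧
  ∀ b, Filter.Tendsto (fun n => (wordIter σ n [b]).length) Filter.atTop Filter.atTop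

/-- `σ` is of constant length `p`. -/
def ConstantLength {A : Type*} (σ : A → List A) (p : ℕ) : Prop := ∀ a, (σ a).length = p
/-- Integers `p, q` are multiplicatively independent:
`p^k = q^l` (k, l ∈ ℕ) implies `k = l = 0`. -/
def MultiplicativelyIndependent (p q : ℕ) : Prop :=
  ∀ k l : ℕ, p ^ k = q ^ l → k = 0 ∧ l = 0

/-!
Suppose a letter `c` occurs infinitely often in `x` but with unbounded gaps. Whether the
`p^k`-block of `y` at index `m` (the factor `y_{[p^k m, p^k m + p^k)}`, which is `σ^k(y_m)`)
contains a preimage of `c` depends only on `y_m` and on the set of letters whose `k`-th image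
meets `φ⁻¹{c}`; these sets are iterates of a map on the finite type `Set A`, hence eventually
periodic in `k`. The same holds for `τ`. A long gap yields a `q^l`-block at index `m` without
`c`, and so without `c` at all levels `l + tj`; an occurrence of `c` far out yields a
`p^k`-block at index `m' > m` containing `c` at all levels `k + si`. Since `log p / log q` is
irrational, the ratios `p^(k+si) / q^(l+tj)` are dense in `(0, ∞)`, so for suitable `i, j` the
second block lies inside the first, a contradiction.
-/

open Function Set Filter Topology

theorem Function.exists_isPeriodicPt_iterate {α : Type*} [Finite α] (f : α → α) (a : α) :
    ∃ k t, 0 < t ∧ IsPeriodicPt f t (f^[k] a) := by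
  obtain ⟨k₀, k₁, hne, heq⟩ := Finite.exists_ne_map_eq_of_infinite fun n => f^[n] a
  wlog hlt : k₀ < k₁ generalizing k₀ k₁
  · exact this k₁ k₀ hne.symm heq.symm (by omega)
  refine ⟨k₀, k₁ - k₀, by omega, ?_⟩
  rw [IsPeriodicPt, IsFixedPt, ← iterate_add_apply, Nat.sub_add_cancel hlt.le]
  exact heq.symm

theorem MultiplicativelyIndependent.pow {p q : ℕ} (h : MultiplicativelyIndependent p q)
    {s t : ℕ} (hs : 0 < s) (ht : 0 < t) : MultiplicativelyIndependent (p ^ s) (q ^ t) := by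
  intro k l hkl
  rw [← pow_mul, ← pow_mul] at hkl
  obtain ⟨hk, hl⟩ := h _ _ hkl
  exact ⟨(Nat.mul_eq_zero.1 hk).resolve_left hs.ne', (Nat.mul_eq_zero.1 hl).resolve_left ht.ne'⟩

theorem MultiplicativelyIndependent.irrational_log_div_log {p q : ℕ}
    (h : MultiplicativelyIndependent p q) (hp : 1 < p) (hq : 1 < q) :
    Irrational (Real.log p / Real.log q) := by
  have hlogp : 0 < Real.log p := Real.log_pos (by exact_mod_cast hp)
  have hlogq : 0 < Real.log q := Real.log_pos (by exact_mod_cast hq)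
  rintro ⟨r, hr⟩
  have hr0 : 0 < r := by exact_mod_cast hr ▸ div_pos hlogp hlogq
  obtain ⟨n, hn⟩ := Int.eq_ofNat_of_zero_le (Rat.num_pos.2 hr0).le
  have hlog : Real.log ((p : ℝ) ^ r.den) = Real.log ((q : ℝ) ^ n) := by
    have hcast : (r : ℝ) = n / r.den := by rw [Rat.cast_def, hn, Int.cast_natCast]
    rw [hcast, div_eq_div_iff (by positivity) hlogq.ne'] at hr
    rw [Real.log_pow, Real.log_pow]
    linarith
  have hpow : p ^ r.den = q ^ n := by
    exact_mod_cast Real.log_injOn_pos (mem_Ioi.2 (by positivity)) (mem_Ioi.2 (by positivity)) hlog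
  exact r.den_nz (h _ _ hpow).1

/-- The ℕ-multiples of `α` are dense in `ℝ ⧸ βℤ`, even those beyond any bound; taking them large
makes `j` nonnegative. -/
theorem Irrational.exists_nat_mul_sub_nat_mul_mem_Ioo {α β : ℝ} (hα : 0 < α) (hβ : 0 < β)
    (h : Irrational (α / β)) {u v : ℝ} (huv : u < v) :
    ∃ i j : ℕ, i * α - j * β ∈ Ioo u v := by
  have : Fact (0 < β) := ⟨hβ⟩
  have hdense : DenseRange (fun n : ℕ => n • (α : AddCircle β)) :=
    denseRange_zsmul_iff_nsmul.1 (AddCircle.denseRange_zsmul_coe_iff.2 h)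
  set w : AddCircle β := (((u + v) / 2 : ℝ) : AddCircle β)
  have hclust : MapClusterPt w atTop (fun n : ℕ => n • (α : AddCircle β)) :=
    ((mapClusterPt_atTop_nsmul_tfae w _).out 0 2).2 (hdense w)
  have hnhds : (QuotientAddGroup.mk '' Ioo u v : Set (AddCircle β)) ∈ 𝓝 w :=
    (QuotientAddGroup.isOpenMap_coe _ isOpen_Ioo).mem_nhds ⟨_, ⟨by linarith, by linarith⟩, rfl⟩
  obtain ⟨N, hN⟩ := exists_nat_gt (v / α)
  obtain ⟨n, ⟨u', hu', hn⟩, hNn⟩ :=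
    ((hclust.frequently hnhds).and_eventually (eventually_ge_atTop N)).exists
  rw [← AddCircle.coe_nsmul, QuotientAddGroup.eq, AddSubgroup.mem_zmultiples_iff] at hn
  obtain ⟨k, hk⟩ := hn
  rw [zsmul_eq_mul, nsmul_eq_mul] at hk
  have hvn : v < n * α := by
    rw [div_lt_iff₀ hα] at hN
    nlinarith [(Nat.cast_le (α := ℝ)).2 hNn]
  have hk0 : 0 ≤ k := by
    have : (0 : ℝ) < k * β := by linarith [hu'.2]
    exact_mod_cast (pos_of_mul_pos_left this hβ.le).le
  lift k to ℕ using hk0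
  refine ⟨n, k, ?_, ?_⟩ <;> push_cast at hk <;> linarith [hu'.1, hu'.2]

theorem Nat.mul_pow_lt_mul_pow_of_log_lt {a b m n k l : ℕ} (ha : 0 < a) (hb : 0 < b)
    (hm : 0 < m) (hn : 0 < n)
    (h : Real.log a + k * Real.log m < Real.log b + l * Real.log n) :
    a * m ^ k < b * n ^ l := by
  rw [← Real.log_pow, ← Real.log_pow, ← Real.log_mul (by positivity) (by positivity),
    ← Real.log_mul (by positivity) (by positivity)] at h
  exact_mod_cast Real.log_lt_log_iff (by positivity) (by positivity) |>.1 h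

theorem MultiplicativelyIndependent.exists_pow_between {p q : ℕ}
    (h : MultiplicativelyIndependent p q) (hp : 1 < p) (hq : 1 < q) {a b c d : ℕ}
    (ha : 0 < a) (hb : 0 < b) (hd : 0 < d) (habcd : a * d < b * c) :
    ∃ i j : ℕ, a * q ^ j < b * p ^ i ∧ d * p ^ i < c * q ^ j := by
  have hc : 0 < c := by nlinarith
  have huv : Real.log a - Real.log b < Real.log c - Real.log d := by
    have := Real.log_lt_log (by positivity)
      (show ((a * d : ℕ) : ℝ) < (b * c : ℕ) by exact_mod_cast habcd)
    push_cast at this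
    rw [Real.log_mul (by positivity) (by positivity),
      Real.log_mul (by positivity) (by positivity)] at this
    linarith
  obtain ⟨i, j, hlo, hhi⟩ := (h.irrational_log_div_log hp hq).exists_nat_mul_sub_nat_mul_mem_Ioo
    (Real.log_pos (by exact_mod_cast hp)) (Real.log_pos (by exact_mod_cast hq)) huv
  exact ⟨i, j, Nat.mul_pow_lt_mul_pow_of_log_lt ha hb (by omega) (by omega) (by linarith),
    Nat.mul_pow_lt_mul_pow_of_log_lt hd hc (by omega) (by omega) (by linarith)⟩

section Blocks

variable {C : Type*}

def BlockContains (x : ℕ → C) (n m : ℕ) (c : C) : Prop := ∃ r < n, x (n * m + r) = c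

theorem occursAt_singleton_iff {x : ℕ → C} {c : C} {i : ℕ} : OccursAt x [c] i ↔ x i = c := by
  simp [OccursAt, factorAt, List.range_one]

theorem exists_not_blockContains_of_not_boundedGaps {x : ℕ → C} {c : C}
    (h : ¬ BoundedGaps x [c]) {n : ℕ} (hn : 0 < n) : ∃ m, 0 < m ∧ ¬ BlockContains x n m c := by
  simp only [BoundedGaps, occursAt_singleton_iff, not_exists, not_and, not_forall] at h
  -- a gap of length `3n` starting at `i` contains the whole block at index `i / n + 1 > 0`
  obtain ⟨i, hi⟩ := h (3 * n) (by omega)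
  refine ⟨i / n + 1, Nat.succ_pos _, fun ⟨r, hr, hxr⟩ => hi _ ?_ ?_ hxr⟩ <;>
  · have hdm := Nat.div_add_mod i n
    have hmod := Nat.mod_lt i hn
    rw [mul_add_one]
    generalize n * (i / n) = N at hdm ⊢
    omega

theorem Set.Infinite.exists_blockContains {x : ℕ → C} {c : C} (h : {i | x i = c}.Infinite)
    {n : ℕ} (hn : 0 < n) (M : ℕ) : ∃ m, M < m ∧ BlockContains x n m c := by
  obtain ⟨s, hs, hMs⟩ := h.exists_gt (n * (M + 1))
  refine ⟨s / n, (Nat.le_div_iff_mul_le hn).2 ?_, s % n, Nat.mod_lt s hn, by rwa [Nat.div_add_mod]⟩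
  linarith [mul_comm n (M + 1)]

theorem BlockContains.of_le {x : ℕ → C} {c : C} {n n' m m' : ℕ} (h : BlockContains x n m' c)
    (hlo : n' * m ≤ n * m') (hhi : n * (m' + 1) ≤ n' * (m + 1)) : BlockContains x n' m c := by
  obtain ⟨r, hr, hxr⟩ := h
  refine ⟨n * m' + r - n' * m, by rw [mul_add_one, mul_add_one] at hhi; omega, ?_⟩
  rwa [Nat.add_sub_cancel' (by omega)]

end Blocks

section Substitution

variable {A C : Type*} {σ : A → List A} {p : ℕ} {y : ℕ → A}

theorem wordIter_append (k : ℕ) (u v : List A) :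
    wordIter σ k (u ++ v) = wordIter σ k u ++ wordIter σ k v := by
  induction k generalizing u v with
  | zero => rfl
  | succ k ih =>
    simp only [wordIter, iterate_succ_apply, substWord, List.flatMap_append] at *
    rw [ih]

theorem ConstantLength.length_substWord (h : ConstantLength σ p) (w : List A) :
    (substWord σ w).length = p * w.length := by
  simp [substWord, List.length_flatMap, show ∀ a, (σ a).length = p from h, mul_comm]

theorem seqPrefix_add (x : ℕ → A) (n k : ℕ) :
    seqPrefix x (n + k) = seqPrefix x n ++ factorAt x n k := by
  simp [seqPrefix, factorAt, List.range_add]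

theorem IsFixedPoint.seqPrefix_pow_mul (hy : IsFixedPoint σ y) (h : ConstantLength σ p)
    (k n : ℕ) : seqPrefix y (p ^ k * n) = wordIter σ k (seqPrefix y n) := by
  induction k generalizing n with
  | zero => simp [wordIter]
  | succ k ih =>
    have hstep : seqPrefix y (p * n) = substWord σ (seqPrefix y n) := by
      have := hy n
      rw [IsPrefixSeq, h.length_substWord, seqPrefix] at this
      simpa [seqPrefix] using this.symm
    rw [pow_succ, mul_assoc, ih, hstep]
    rfl

theorem IsFixedPoint.factorAt_pow_mul (hy : IsFixedPoint σ y) (h : ConstantLength σ p)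
    (k m : ℕ) : factorAt y (p ^ k * m) (p ^ k) = wordIter σ k [y m] := by
  have := hy.seqPrefix_pow_mul h k (m + 1)
  rw [mul_add_one, seqPrefix_add, hy.seqPrefix_pow_mul h, seqPrefix_add, wordIter_append] at this
  simpa [factorAt] using this

def hitSet (σ : A → List A) (S : Set A) : Set A := {a | ∃ e ∈ σ a, e ∈ S}

theorem mem_iterate_hitSet {S : Set A} {k : ℕ} {a : A} :
    a ∈ (hitSet σ)^[k] S ↔ ∃ e ∈ wordIter σ k [a], e ∈ S := by
  induction k generalizing S with
  | zero => simp [wordIter]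
  | succ k ih =>
    rw [iterate_succ_apply, ih]
    simp only [wordIter, iterate_succ_apply', hitSet, substWord, mem_ofPred_eq, List.mem_flatMap]
    aesop

theorem IsFixedPoint.blockContains_iff (hy : IsFixedPoint σ y) (h : ConstantLength σ p)
    (φ : A → C) (c : C) (k m : ℕ) :
    BlockContains (φ ∘ y) (p ^ k) m c ↔ y m ∈ (hitSet σ)^[k] (φ ⁻¹' {c}) := by
  rw [mem_iterate_hitSet, ← hy.factorAt_pow_mul h]
  simp [BlockContains, factorAt]

theorem IsFixedPoint.exists_periodic_blockContains [Finite A] (hy : IsFixedPoint σ y)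
    (h : ConstantLength σ p) (φ : A → C) (c : C) :
    ∃ k t, 0 < t ∧ ∀ j m,
      BlockContains (φ ∘ y) (p ^ (t * j + k)) m c ↔ BlockContains (φ ∘ y) (p ^ k) m c := by
  obtain ⟨k, t, ht, hper⟩ := exists_isPeriodicPt_iterate (hitSet σ) (φ ⁻¹' {c})
  refine ⟨k, t, ht, fun j m => ?_⟩
  rw [hy.blockContains_iff h, hy.blockContains_iff h, iterate_add_apply, (hper.mul_const j).eq]

end Substitution

theorem letters_bounded_gaps_general {A B C : Type*} [Fintype A] [Fintype B]
    (p q : ℕ) (hp : 2 ≤ p) (hq : 2 ≤ q) (hind : MultiplicativelyIndependent p q)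
    (σ : A → List A) (hσlen : ConstantLength σ p)
    (y : ℕ → A) (hy : IsFixedPoint σ y)
    (τ : B → List B) (hτlen : ConstantLength τ q)
    (z : ℕ → B) (hz : IsFixedPoint τ z)
    (φ : A → C) (ψ : B → C) (x : ℕ → C) (hφ : φ ∘ y = x) (hψ : ψ ∘ z = x) :
    ∀ c : C, { i : ℕ | x i = c }.Infinite → BoundedGaps x [c] := by
  intro c hinf
  by_contra hgap
  obtain ⟨k, s, hs, hσper⟩ := hy.exists_periodic_blockContains hσlen φ c
  obtain ⟨l, t, ht, hτper⟩ := hz.exists_periodic_blockContains hτlen ψ c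
  rw [hφ] at hσper
  rw [hψ] at hτper
  have hP : 0 < p ^ k := pow_pos (by omega) k
  have hQ : 0 < q ^ l := pow_pos (by omega) l
  obtain ⟨m, hm, hfree⟩ := exists_not_blockContains_of_not_boundedGaps hgap hQ
  obtain ⟨m', hmm', hhit⟩ := hinf.exists_blockContains hP m
  -- levels at which the `p`-block at `m'` lies inside the `q`-block at `m`
  have hcross : m * q ^ l * ((m' + 1) * p ^ k) < m' * p ^ k * ((m + 1) * q ^ l) := by
    calc _ = m * (m' + 1) * (q ^ l * p ^ k) := by ring
      _ < m' * (m + 1) * (q ^ l * p ^ k) :=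
        Nat.mul_lt_mul_of_pos_right (by nlinarith) (Nat.mul_pos hQ hP)
      _ = _ := by ring
  obtain ⟨i, j, hlo, hhi⟩ := (hind.pow hs ht).exists_pow_between
    (Nat.one_lt_pow hs.ne' (by omega)) (Nat.one_lt_pow ht.ne' (by omega))
    (Nat.mul_pos hm hQ) (Nat.mul_pos (by omega) hP) (Nat.mul_pos (by omega) hP) hcross
  refine hfree ((hτper j m).1 (((hσper i m').2 hhit).of_le ?_ ?_)) <;>
    rw [pow_add, pow_add, pow_mul, pow_mul] <;> linarith

/-- **Letters appear with bounded gaps.** Let `p, q ≥ 2` be multiplicatively independent,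
`σ` a substitution of constant length `p` with fixed point `y`, `τ` a substitution of
constant length `q` with fixed point `z`, and `φ, ψ` letter-to-letter morphisms with
`φ(y) = ψ(z) = x`. Then every letter of `C` having infinitely many occurrences in `x`
occurs in `x` with bounded gaps. -/
theorem letters_bounded_gaps {A B C : Type*} [Fintype A] [Fintype B] [Fintype C]
    (p q : ℕ) (hp : 2 ≤ p) (hq : 2 ≤ q) (hind : MultiplicativelyIndependent p q)
    (σ : A → List A) (hσ : IsSubstitution σ) (hσlen : ConstantLength σ p)
    (y : ℕ → A) (hy : IsFixedPoint σ y)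
    (τ : B → List B) (hτ : IsSubstitution τ) (hτlen : ConstantLength τ q)
    (z : ℕ → B) (hz : IsFixedPoint τ z)
    (φ : A → C) (ψ : B → C) (x : ℕ → C) (hφ : φ ∘ y = x) (hψ : ψ ∘ z = x) :
    ∀ c : C, { i : ℕ | x i = c }.Infinite → BoundedGaps x [c] :=
  letters_bounded_gaps_general p q hp hq hind σ hσlen y hy τ hτlen z hz φ ψ x hφ hψ
end
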